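/- Let X₃(1) be the 3×3 real matrix (1/6) · [[2, −6, 10], [−2, 3, 5], [2, 3, 1]], and let q₀, q₁, q₂ ≥ 0 be real numbers with q₀ + q₁ + q₂ = 1. Then all three components of the row vector (q₀, q₁, q₂) · X₃(1) are nonnegative if and only if q₀ ≤ 1/3 and q₁ ≤ 1/2. -/

import Mathlib

open Matrix BigOperators

/-- The matrix `X₃(1)` for two spin-1 particles (`j_A = j_B = 1`), coinciding with
the `X` matrix for `O(3) ⊗ O(3)`-invariant states in `ℂ³ ⊗ ℂ³`. -/
noncomputable def X₃one : Matrix (Fin 3) (Fin 3) ℝ :=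
  (1 / 6 : ℝ) • !![2, -6, 10; -2, 3, 5; 2, 3, 1]

/-- For fidelities `q₀, q₁, q₂ ≥ 0` with `q₀ + q₁ + q₂ = 1`, the PPT condition
`(q₀,q₁,q₂)·X₃(1) ≥ 0` holds iff `q₀ ≤ 1/3` and `q₁ ≤ 1/2`. -/
theorem ppt_iff_two_spin_one (q : Fin 3 → ℝ)
    (hq : ∀ J, 0 ≤ q J) (hsum : q 0 + q 1 + q 2 = 1) :
    (∀ J' : Fin 3, 0 ≤ ∑ J : Fin 3, q J * X₃one J J') ↔
      (q 0 ≤ 1 / 3 ∧ q 1 ≤ 1 / 2) := by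
  have h0 := hq 0; have h1 := hq 1; have h2 := hq 2
  simp only [X₃one, Matrix.smul_apply, Fin.sum_univ_three] at *
  constructor
  · intro h
    have ha := h 0; have hb := h 1
    norm_num [Matrix.cons_val_zero, Matrix.cons_val_one, Matrix.vecHead, Matrix.vecTail, Matrix.cons_val_two] at ha hb
    constructor <;> linarith
  · intro ⟨ha, hb⟩ J'
    fin_cases J' <;> norm_num [Matrix.cons_val_zero, Matrix.cons_val_one, Matrix.vecHead, Matrix.vecTail, Matrix.cons_val_two] <;> linarith
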